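/- Let r > 0, {v₀,v₁,w} a positive oriented orthonormal system, k₀ = √(1+r²)/r, and α(t) = √(1+r²) w + r cos(2πt) v₁ + r sin(2πt) v₀. Let λ₁, λ₂ : ℝ → ℝ be C² and set V(t) = λ₁(t) α̇(t) + λ₂(t) (α(t) ×ₘ α̇(t)). Then the linearization expression L V := −D_t²V + ⟨α̇,α̇⟩ₘ V − ⟨V, α̇⟩ₘ α̇ + |α̇|ₘ⁻¹ ⟨D_tV, α̇⟩ₘ k₀ (α ×ₘ α̇) + |α̇|ₘ k₀ (α ×ₘ D_tV) satisfies L V(t) = (−λ₁''(t) + 2π√(1+r²) λ₂'(t)) α̇(t) + (−λ₂''(t) − 4π² λ₂(t)) (α(t) ×ₘ α̇(t)) for all t. -/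

import Mathlib

noncomputable section

open Real

/-- The Minkowski inner product on ℝ³. -/
def mink (v w : Fin 3 → ℝ) : ℝ := v 0 * w 0 + v 1 * w 1 - v 2 * w 2

/-- The twisted cross product on ℝ³. -/
def mcross (v w : Fin 3 → ℝ) : Fin 3 → ℝ :=
  ![v 2 * w 1 - v 1 * w 2, v 0 * w 2 - v 2 * w 0, v 0 * w 1 - v 1 * w 0]

/-- A positive oriented orthonormal system with respect to the Minkowski metric. -/
def posOrth (v₀ v₁ w : Fin 3 → ℝ) : Prop :=
  mink v₀ v₁ = 0 ∧ mink v₀ w = 0 ∧ mink v₁ w = 0 ∧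
  mink v₀ v₀ = 1 ∧ mink v₁ v₁ = 1 ∧ mink w w = -1 ∧
  mcross v₀ v₁ = w

/-- Membership in the hyperbolic plane ℍ ⊂ ℝ³. -/
def inH (x : Fin 3 → ℝ) : Prop := x 2 ^ 2 - x 0 ^ 2 - x 1 ^ 2 = 1 ∧ 0 < x 2

/-- The covariant derivative on ℍ of a tangent vector field `V` along a curve `γ` in ℍ:
`D_t V(t) = V̇(t) + ⟨V̇(t), γ(t)⟩ₘ γ(t)`. -/
def covDt (γ V : ℝ → Fin 3 → ℝ) : ℝ → Fin 3 → ℝ :=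
  fun t => deriv V t + mink (deriv V t) (γ t) • γ t

/-- The linearization of the prescribed geodesic curvature operator along a curve α in ℍ:
`L W = −D_t²W + ⟨α̇,α̇⟩ₘ W − ⟨W,α̇⟩ₘ α̇ + |α̇|ₘ⁻¹ ⟨D_tW,α̇⟩ₘ k₀ (α ×ₘ α̇) + |α̇|ₘ k₀ (α ×ₘ D_tW)`. -/
def linOp (k₀ : ℝ) (α W : ℝ → Fin 3 → ℝ) (t : ℝ) : Fin 3 → ℝ :=
  -(covDt α (covDt α W) t) + mink (deriv α t) (deriv α t) • W t
    - mink (W t) (deriv α t) • deriv α t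
    + ((Real.sqrt (mink (deriv α t) (deriv α t)))⁻¹ * mink (covDt α W t) (deriv α t) * k₀) •
        mcross (α t) (deriv α t)
    + (Real.sqrt (mink (deriv α t) (deriv α t)) * k₀) • mcross (α t) (covDt α W t)


/-! The circle `α` has constant speed `s = 2πr` and satisfies `D_t α̇ = κ (α ×ₘ α̇)` with
`κ = 2π√(1+r²) = s k₀`, i.e. it has constant geodesic curvature `k₀`. Since `α ×ₘ (α ×ₘ α̇) = -α̇`
on `ℍ`, the frame `T = α̇`, `B = α ×ₘ α̇` then obeys the Frenet equations `D_t T = κ B`,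
`D_t B = -κ T`, so `D_t` acts on `λ₁ T + λ₂ B` by `(λ₁, λ₂) ↦ (λ₁' - κ λ₂, λ₂' + κ λ₁)`.
Applying this twice and collecting the zeroth-order terms of `L` gives the formula, the
coefficient `s² - κ² = -4π²` of `λ₂` coming from `1 + r² - r² = 1`. -/

lemma fin3_ext {u v : Fin 3 → ℝ} (h₀ : u 0 = v 0) (h₁ : u 1 = v 1) (h₂ : u 2 = v 2) :
    u = v := by
  ext i
  fin_cases i <;> assumption

lemma mink_comm (v w : Fin 3 → ℝ) : mink v w = mink w v := by
  simp only [mink]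
  ring

lemma mink_add_left (u v w : Fin 3 → ℝ) : mink (u + v) w = mink u w + mink v w := by
  simp only [mink, Pi.add_apply]
  ring

lemma mink_smul_left (c : ℝ) (v w : Fin 3 → ℝ) : mink (c • v) w = c * mink v w := by
  simp only [mink, Pi.smul_apply, smul_eq_mul]
  ring

lemma mink_mcross_self_left (v w : Fin 3 → ℝ) : mink (mcross v w) v = 0 := by
  simp only [mink, mcross, Matrix.cons_val_zero, Matrix.cons_val_one, Matrix.cons_val]
  ring

lemma mink_mcross_self_right (v w : Fin 3 → ℝ) : mink (mcross v w) w = 0 := by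
  simp only [mink, mcross, Matrix.cons_val_zero, Matrix.cons_val_one, Matrix.cons_val]
  ring

lemma mcross_self (v : Fin 3 → ℝ) : mcross v v = 0 := by
  refine fin3_ext ?_ ?_ ?_ <;>
    simp only [mcross, Matrix.cons_val_zero, Matrix.cons_val_one, Matrix.cons_val,
      Pi.zero_apply] <;> ring

lemma mcross_anticomm (v w : Fin 3 → ℝ) : mcross v w = -mcross w v := by
  refine fin3_ext ?_ ?_ ?_ <;>
    simp only [mcross, Matrix.cons_val_zero, Matrix.cons_val_one, Matrix.cons_val,
      Pi.neg_apply] <;> ring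

lemma mcross_add_left (u v w : Fin 3 → ℝ) : mcross (u + v) w = mcross u w + mcross v w := by
  simp only [mcross, Pi.add_apply, Matrix.vec3_add]
  apply Matrix.vec3_eq <;> ring

lemma mcross_add_right (u v w : Fin 3 → ℝ) : mcross u (v + w) = mcross u v + mcross u w := by
  simp only [mcross, Pi.add_apply, Matrix.vec3_add]
  apply Matrix.vec3_eq <;> ring

lemma mcross_smul_left (c : ℝ) (v w : Fin 3 → ℝ) : mcross (c • v) w = c • mcross v w := by
  simp only [mcross, Pi.smul_apply, smul_eq_mul, Matrix.smul_vec3]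
  apply Matrix.vec3_eq <;> ring

lemma mcross_smul_right (c : ℝ) (v w : Fin 3 → ℝ) : mcross v (c • w) = c • mcross v w := by
  simp only [mcross, Pi.smul_apply, smul_eq_mul, Matrix.smul_vec3]
  apply Matrix.vec3_eq <;> ring

lemma mcross_mcross (u v w : Fin 3 → ℝ) :
    mcross u (mcross v w) = mink u v • w - mink u w • v := by
  refine fin3_ext ?_ ?_ ?_ <;>
    simp only [mcross, mink, Matrix.cons_val_zero, Matrix.cons_val_one, Matrix.cons_val,
      Pi.sub_apply, Pi.smul_apply, smul_eq_mul] <;> ring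

theorem HasDerivAt.mink {f g : ℝ → Fin 3 → ℝ} {f' g' : Fin 3 → ℝ} {t : ℝ}
    (hf : HasDerivAt f f' t) (hg : HasDerivAt g g' t) :
    HasDerivAt (fun s => mink (f s) (g s)) (mink f' (g t) + mink (f t) g') t := by
  have hf := hasDerivAt_pi.1 hf
  have hg := hasDerivAt_pi.1 hg
  exact ((((hf 0).mul (hg 0)).add ((hf 1).mul (hg 1))).sub ((hf 2).mul (hg 2))).congr_deriv
    (by simp only [_root_.mink]; ring)

theorem HasDerivAt.mcross {f g : ℝ → Fin 3 → ℝ} {f' g' : Fin 3 → ℝ} {t : ℝ}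
    (hf : HasDerivAt f f' t) (hg : HasDerivAt g g' t) :
    HasDerivAt (fun s => mcross (f s) (g s)) (mcross f' (g t) + mcross (f t) g') t := by
  have hf := hasDerivAt_pi.1 hf
  have hg := hasDerivAt_pi.1 hg
  refine hasDerivAt_pi.2 fun i => ?_
  fin_cases i
  · exact (((hf 2).mul (hg 1)).sub ((hf 1).mul (hg 2))).congr_deriv
      (by simp only [_root_.mcross, Fin.zero_eta, Pi.add_apply, Matrix.cons_val_zero]; ring)
  · exact (((hf 0).mul (hg 2)).sub ((hf 2).mul (hg 0))).congr_deriv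
      (by simp only [_root_.mcross, Fin.mk_one, Pi.add_apply, Matrix.cons_val_one,
        Matrix.cons_val_zero]; ring)
  · exact (((hf 0).mul (hg 1)).sub ((hf 1).mul (hg 0))).congr_deriv
      (by simp only [_root_.mcross, Fin.reduceFinMk, Pi.add_apply, Matrix.cons_val]; ring)

section CovariantDerivative

variable {γ : ℝ → Fin 3 → ℝ} {t : ℝ}

lemma covDt_add {X Y : ℝ → Fin 3 → ℝ} (hX : DifferentiableAt ℝ X t)
    (hY : DifferentiableAt ℝ Y t) :
    covDt γ (fun s => X s + Y s) t = covDt γ X t + covDt γ Y t := by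
  simp only [covDt, deriv_fun_add hX hY, mink_add_left, add_smul]
  abel

lemma covDt_smul {f : ℝ → ℝ} {X : ℝ → Fin 3 → ℝ} (hf : DifferentiableAt ℝ f t)
    (hX : DifferentiableAt ℝ X t) (hXγ : mink (X t) (γ t) = 0) :
    covDt γ (fun s => f s • X s) t = deriv f t • X t + f t • covDt γ X t := by
  simp only [covDt, deriv_fun_smul hf hX, mink_add_left, mink_smul_left, hXγ]
  module

end CovariantDerivative

section ConstantCurvature

variable {α : ℝ → Fin 3 → ℝ}

lemma mink_deriv_self_eq_zero (hα : Differentiable ℝ α) (hH : ∀ t, mink (α t) (α t) = -1)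
    (t : ℝ) : mink (deriv α t) (α t) = 0 := by
  have h := (hα t).hasDerivAt.mink (hα t).hasDerivAt
  rw [show (fun s => mink (α s) (α s)) = fun _ => -1 from funext hH, mink_comm (α t)] at h
  linarith [h.unique (hasDerivAt_const t (-1 : ℝ))]

lemma covDt_mcross_deriv (hα : Differentiable ℝ α) (hα' : Differentiable ℝ (deriv α))
    (hH : ∀ t, mink (α t) (α t) = -1) {κ : ℝ}
    (hcurv : ∀ t, covDt α (deriv α) t = κ • mcross (α t) (deriv α t)) (t : ℝ) :
    covDt α (fun s => mcross (α s) (deriv α s)) t = (-κ) • deriv α t := by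
  have hαT := mink_deriv_self_eq_zero hα hH t
  have hacc : deriv (deriv α) t =
      κ • mcross (α t) (deriv α t) + (-mink (deriv (deriv α) t) (α t)) • α t := by
    rw [← hcurv t, covDt]
    module
  have hB : deriv (fun s => mcross (α s) (deriv α s)) t = (-κ) • deriv α t := by
    rw [((hα t).hasDerivAt.mcross (hα' t).hasDerivAt).deriv, mcross_self, zero_add, hacc,
      mcross_add_right, mcross_smul_right, mcross_smul_right, mcross_self, mcross_mcross, hH,
      mink_comm (α t), hαT]
    module
  rw [covDt, hB, mink_smul_left, hαT, mul_zero, zero_smul, add_zero]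

lemma covDt_frame (hα : Differentiable ℝ α) (hα' : Differentiable ℝ (deriv α))
    (hH : ∀ t, mink (α t) (α t) = -1) {κ : ℝ}
    (hcurv : ∀ t, covDt α (deriv α) t = κ • mcross (α t) (deriv α t))
    {μ₁ μ₂ : ℝ → ℝ} (h₁ : Differentiable ℝ μ₁) (h₂ : Differentiable ℝ μ₂) (t : ℝ) :
    covDt α (fun s => μ₁ s • deriv α s + μ₂ s • mcross (α s) (deriv α s)) t =
      (deriv μ₁ t - κ * μ₂ t) • deriv α t +
        (deriv μ₂ t + κ * μ₁ t) • mcross (α t) (deriv α t) := by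
  have hB : Differentiable ℝ fun s => mcross (α s) (deriv α s) := fun s =>
    ((hα s).hasDerivAt.mcross (hα' s).hasDerivAt).differentiableAt
  rw [covDt_add ((h₁ t).fun_smul (hα' t)) ((h₂ t).fun_smul (hB t)),
    covDt_smul (h₁ t) (hα' t) (mink_deriv_self_eq_zero hα hH t),
    covDt_smul (h₂ t) (hB t) (mink_mcross_self_left _ _), hcurv t,
    covDt_mcross_deriv hα hα' hH hcurv t]
  module

theorem linOp_frame (hα : Differentiable ℝ α) (hα' : Differentiable ℝ (deriv α))
    (hH : ∀ t, mink (α t) (α t) = -1) {s k₀ κ : ℝ} (hs : 0 ≤ s)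
    (hspeed : ∀ t, mink (deriv α t) (deriv α t) = s ^ 2)
    (hcurv : ∀ t, covDt α (deriv α) t = κ • mcross (α t) (deriv α t)) (hκ : s * k₀ = κ)
    {lam₁ lam₂ : ℝ → ℝ} (h₁ : Differentiable ℝ lam₁) (h₁' : Differentiable ℝ (deriv lam₁))
    (h₂ : Differentiable ℝ lam₂) (h₂' : Differentiable ℝ (deriv lam₂)) (t : ℝ) :
    linOp k₀ α (fun t => lam₁ t • deriv α t + lam₂ t • mcross (α t) (deriv α t)) t =
      (-deriv (deriv lam₁) t + κ * deriv lam₂ t) • deriv α t +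
        (-deriv (deriv lam₂) t + (s ^ 2 - κ ^ 2) * lam₂ t) • mcross (α t) (deriv α t) := by
  have hμ₁ : ∀ t, HasDerivAt (fun t => deriv lam₁ t - κ * lam₂ t)
      (deriv (deriv lam₁) t - κ * deriv lam₂ t) t := fun t =>
    (h₁' t).hasDerivAt.sub ((h₂ t).hasDerivAt.const_mul κ)
  have hμ₂ : ∀ t, HasDerivAt (fun t => deriv lam₂ t + κ * lam₁ t)
      (deriv (deriv lam₂) t + κ * deriv lam₁ t) t := fun t =>
    (h₂' t).hasDerivAt.add ((h₁ t).hasDerivAt.const_mul κ)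
  have hDV := funext (covDt_frame hα hα' hH hcurv h₁ h₂)
  have hD2V := covDt_frame hα hα' hH hcurv (fun t => (hμ₁ t).differentiableAt)
    (fun t => (hμ₂ t).differentiableAt) t
  rw [(hμ₁ t).deriv, (hμ₂ t).deriv] at hD2V
  have hαB : mcross (α t) (mcross (α t) (deriv α t)) = -deriv α t := by
    rw [mcross_mcross, hH, mink_comm, mink_deriv_self_eq_zero hα hH]
    module
  have hinv : s⁻¹ * s ^ 2 = s := by rw [sq, ← mul_assoc, inv_mul_mul_self]
  simp only [linOp, hDV, hD2V, hspeed, Real.sqrt_sq hs, mink_add_left, mink_smul_left,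
    mink_mcross_self_right, mcross_add_right, mcross_smul_right, hαB]
  subst hκ
  match_scalars
  · ring
  · linear_combination (deriv lam₁ t - s * k₀ * lam₂ t) * k₀ * hinv

end ConstantCurvature

section HyperbolicCircle

variable {v₀ v₁ w : Fin 3 → ℝ}

lemma mink_frame (hsys : posOrth v₀ v₁ w) (x₁ y₁ z₁ x₂ y₂ z₂ : ℝ) :
    mink (x₁ • v₀ + y₁ • v₁ + z₁ • w) (x₂ • v₀ + y₂ • v₁ + z₂ • w) =
      x₁ * x₂ + y₁ * y₂ - z₁ * z₂ := by
  obtain ⟨h01, h0w, h1w, h00, h11, hww, -⟩ := hsys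
  simp only [mink, Pi.add_apply, Pi.smul_apply, smul_eq_mul] at *
  linear_combination x₁ * x₂ * h00 + y₁ * y₂ * h11 + z₁ * z₂ * hww + (x₁ * y₂ + y₁ * x₂) * h01 +
    (x₁ * z₂ + z₁ * x₂) * h0w + (y₁ * z₂ + z₁ * y₂) * h1w

lemma mcross_frame (hsys : posOrth v₀ v₁ w) (x₁ y₁ z₁ x₂ y₂ z₂ : ℝ) :
    mcross (x₁ • v₀ + y₁ • v₁ + z₁ • w) (x₂ • v₀ + y₂ • v₁ + z₂ • w) =
      (z₁ * y₂ - y₁ * z₂) • v₀ + (x₁ * z₂ - z₁ * x₂) • v₁ + (x₁ * y₂ - y₁ * x₂) • w := by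
  obtain ⟨h01, -, -, h00, h11, -, h01w⟩ := hsys
  have h0w : mcross v₀ w = v₁ := by
    rw [← h01w, mcross_mcross, h00, h01]
    module
  have h1w : mcross v₁ w = -v₀ := by
    rw [← h01w, mcross_mcross, h11, mink_comm, h01]
    module
  simp only [mcross_add_left, mcross_add_right, mcross_smul_left, mcross_smul_right, mcross_self,
    mcross_anticomm w, mcross_anticomm v₁ v₀, h01w, h0w, h1w]
  module

def hypCircle (r ω : ℝ) (v₀ v₁ w : Fin 3 → ℝ) (t : ℝ) : Fin 3 → ℝ :=
  Real.sqrt (1 + r ^ 2) • w + (r * cos (ω * t)) • v₁ + (r * sin (ω * t)) • v₀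

variable {r ω : ℝ}

lemma hypCircle_eq_frame (t : ℝ) :
    hypCircle r ω v₀ v₁ w t =
      (r * sin (ω * t)) • v₀ + (r * cos (ω * t)) • v₁ + Real.sqrt (1 + r ^ 2) • w := by
  rw [hypCircle]
  abel

lemma hasDerivAt_hypCircle (t : ℝ) :
    HasDerivAt (hypCircle r ω v₀ v₁ w)
      ((ω * r * cos (ω * t)) • v₀ + (-(ω * r * sin (ω * t))) • v₁ + (0 : ℝ) • w) t := by
  have hθ := (hasDerivAt_id t).const_mul ω
  exact ((((hθ.cos.const_mul r).smul_const v₁).const_add _).add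
    ((hθ.sin.const_mul r).smul_const v₀)).congr_deriv (by simp only [id]; module)

lemma deriv_hypCircle :
    deriv (hypCircle r ω v₀ v₁ w) = fun t =>
      (ω * r * cos (ω * t)) • v₀ + (-(ω * r * sin (ω * t))) • v₁ + (0 : ℝ) • w :=
  funext fun t => (hasDerivAt_hypCircle t).deriv

lemma hasDerivAt_deriv_hypCircle (t : ℝ) :
    HasDerivAt (deriv (hypCircle r ω v₀ v₁ w))
      ((-(ω ^ 2 * r * sin (ω * t))) • v₀ + (-(ω ^ 2 * r * cos (ω * t))) • v₁ + (0 : ℝ) • w) t := by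
  have hθ := (hasDerivAt_id t).const_mul ω
  rw [deriv_hypCircle]
  exact ((((hθ.cos.const_mul (ω * r)).smul_const v₀).add
    ((hθ.sin.const_mul (ω * r)).neg.smul_const v₁)).add_const _).congr_deriv
      (by simp only [id]; module)

lemma differentiable_hypCircle : Differentiable ℝ (hypCircle r ω v₀ v₁ w) := fun t =>
  (hasDerivAt_hypCircle t).differentiableAt

lemma differentiable_deriv_hypCircle : Differentiable ℝ (deriv (hypCircle r ω v₀ v₁ w)) :=
  fun t => (hasDerivAt_deriv_hypCircle t).differentiableAt

lemma mink_hypCircle_self (hsys : posOrth v₀ v₁ w) (t : ℝ) :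
    mink (hypCircle r ω v₀ v₁ w t) (hypCircle r ω v₀ v₁ w t) = -1 := by
  rw [hypCircle_eq_frame, mink_frame hsys, Real.mul_self_sqrt (by positivity)]
  linear_combination r ^ 2 * sin_sq_add_cos_sq (ω * t)

lemma mink_deriv_hypCircle_self (hsys : posOrth v₀ v₁ w) (t : ℝ) :
    mink (deriv (hypCircle r ω v₀ v₁ w) t) (deriv (hypCircle r ω v₀ v₁ w) t) = (ω * r) ^ 2 := by
  rw [deriv_hypCircle, mink_frame hsys]
  linear_combination (ω * r) ^ 2 * sin_sq_add_cos_sq (ω * t)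

lemma covDt_deriv_hypCircle (hsys : posOrth v₀ v₁ w) (t : ℝ) :
    covDt (hypCircle r ω v₀ v₁ w) (deriv (hypCircle r ω v₀ v₁ w)) t =
      (ω * Real.sqrt (1 + r ^ 2)) •
        mcross (hypCircle r ω v₀ v₁ w t) (deriv (hypCircle r ω v₀ v₁ w) t) := by
  have ha := Real.sq_sqrt (by positivity : (0 : ℝ) ≤ 1 + r ^ 2)
  have hsc := sin_sq_add_cos_sq (ω * t)
  rw [covDt, (hasDerivAt_deriv_hypCircle t).deriv, deriv_hypCircle, hypCircle_eq_frame,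
    mink_frame hsys, mcross_frame hsys]
  match_scalars
  · linear_combination (-(ω ^ 2 * r ^ 3 * sin (ω * t))) * hsc + (ω ^ 2 * r * sin (ω * t)) * ha
  · linear_combination (-(ω ^ 2 * r ^ 3 * cos (ω * t))) * hsc + (ω ^ 2 * r * cos (ω * t)) * ha
  · ring

end HyperbolicCircle

/-- the linearized operator in the moving frame {α̇, α ×ₘ α̇}:
for V = λ₁ α̇ + λ₂ (α ×ₘ α̇),
L V = (−λ₁'' + 2π√(1+r²) λ₂') α̇ + (−λ₂'' − 4π² λ₂)(α ×ₘ α̇). -/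
theorem stmt_13 (r : ℝ) (hr : 0 < r) (v₀ v₁ w : Fin 3 → ℝ) (hsys : posOrth v₀ v₁ w)
    (lam₁ lam₂ : ℝ → ℝ) (h₁ : ContDiff ℝ 2 lam₁) (h₂ : ContDiff ℝ 2 lam₂) :
    let k₀ : ℝ := Real.sqrt (1 + r ^ 2) / r
    let α : ℝ → Fin 3 → ℝ := fun t =>
      Real.sqrt (1 + r ^ 2) • w + (r * Real.cos (2 * Real.pi * t)) • v₁ +
        (r * Real.sin (2 * Real.pi * t)) • v₀
    let V : ℝ → Fin 3 → ℝ := fun t => lam₁ t • deriv α t + lam₂ t • mcross (α t) (deriv α t)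
    ∀ t : ℝ,
      linOp k₀ α V t =
        (-(deriv (deriv lam₁) t) + 2 * Real.pi * Real.sqrt (1 + r ^ 2) * deriv lam₂ t) •
            deriv α t +
          (-(deriv (deriv lam₂) t) - 4 * Real.pi ^ 2 * lam₂ t) • mcross (α t) (deriv α t) := by
  intro k₀ α V t
  have hκ : 2 * π * r * k₀ = 2 * π * Real.sqrt (1 + r ^ 2) := by
    simp only [k₀]
    field_simp
  have hcoef : -(deriv (deriv lam₂) t) - 4 * π ^ 2 * lam₂ t = -deriv (deriv lam₂) t +
      ((2 * π * r) ^ 2 - (2 * π * Real.sqrt (1 + r ^ 2)) ^ 2) * lam₂ t := by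
    rw [mul_pow _ (Real.sqrt _), Real.sq_sqrt (by positivity)]
    ring
  rw [hcoef]
  -- `α` is `hypCircle r (2 * π) v₀ v₁ w` by definition.
  exact linOp_frame (α := hypCircle r (2 * π) v₀ v₁ w) differentiable_hypCircle
    differentiable_deriv_hypCircle (mink_hypCircle_self hsys) (by positivity)
    (mink_deriv_hypCircle_self hsys) (covDt_deriv_hypCircle hsys) hκ
    (h₁.differentiable two_ne_zero) h₁.differentiable_deriv_two
    (h₂.differentiable two_ne_zero) h₂.differentiable_deriv_two t
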